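/- Let R be a commutative ring, n ≥ 1, and u, v ∈ R^{2n} with ⟨u,v⟩ = 0, and suppose v has a symmetric pair of zero coordinates: v_i = v_{−i} = 0 for some i. Let w ∈ R^{2n} with ⟨w,u⟩ = A. Define v_{jk} = (e_j u_{−k} sign(k) − e_k u_{−j} sign(j))(v_j w_k − v_k w_j). Then v_{i,−i} = 0, and decomposing vA = p + q + r with p = Σ_{k≠±i} v_{−i,k}, q = Σ_{k≠±i} v_{i,k}, r = Σ_{j,k≠±i, j<k} v_{jk}, one has p_{−i} = 0, p_i = 0, q_i = 0, q_{−i} = 0, and r_i = r_{−i} = 0. -/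

import Mathlib

open Finset

/-- Index set {-n,…,-1,1,…,n}: `(k, true)` stands for `k+1`, `(k, false)` for `-(k+1)`. -/
abbrev Idx (n : ℕ) := Fin n × Bool

/-- The negative of an index. -/
def Idx.neg {n : ℕ} (i : Idx n) : Idx n := (i.1, !i.2)

/-- The sign of an index, as an element of `R`. -/
def Idx.sgn {n : ℕ} (R : Type*) [Ring R] (i : Idx n) : R := if i.2 then 1 else -1

/-- The integer represented by an index. -/
def Idx.toInt {n : ℕ} (i : Idx n) : ℤ := if i.2 then (i.1 : ℤ) + 1 else -((i.1 : ℤ) + 1)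

variable {R : Type*} [CommRing R] {n : ℕ}

/-- The standard symplectic form on `R^{2n}`: ⟨x,y⟩ = Σ_{i>0} (x_i y_{-i} - x_{-i} y_i). -/
def sform (x y : Idx n → R) : R :=
  ∑ k : Fin n, (x (k, true) * y (k, false) - x (k, false) * y (k, true))

/-- The standard basis vector `e_i`. -/
def evec (i : Idx n) : Idx n → R := fun j => if j = i then (1 : R) else 0

/-- The vector v_{jk} = (e_j u_{-k} sign k - e_k u_{-j} sign j)(v_j w_k - v_k w_j). -/
def vv (u v w : Idx n → R) (j k : Idx n) : Idx n → R :=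
  fun l => (evec j l * u (Idx.neg k) * Idx.sgn R k - evec k l * u (Idx.neg j) * Idx.sgn R j) *
    (v j * w k - v k * w j)

/-- `p = Σ_{k ≠ ±i} v_{-i,k}`. -/
def pvec (u v w : Idx n → R) (i : Idx n) : Idx n → R :=
  ∑ k ∈ Finset.univ.filter (fun k : Idx n => k ≠ i ∧ k ≠ Idx.neg i),
    vv u v w (Idx.neg i) k

/-- `q = Σ_{k ≠ ±i} v_{i,k}`. -/
def qvec (u v w : Idx n → R) (i : Idx n) : Idx n → R :=
  ∑ k ∈ Finset.univ.filter (fun k : Idx n => k ≠ i ∧ k ≠ Idx.neg i),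
    vv u v w i k

/-- `r = Σ_{j,k ≠ ±i, j < k} v_{jk}`. -/
def rvec (u v w : Idx n → R) (i : Idx n) : Idx n → R :=
  ∑ p ∈ Finset.univ.filter (fun p : Idx n × Idx n =>
      p.1 ≠ i ∧ p.1 ≠ Idx.neg i ∧ p.2 ≠ i ∧ p.2 ≠ Idx.neg i ∧ p.1.toInt < p.2.toInt),
    vv u v w p.1 p.2


lemma Idx.neg_neg' (i : Idx n) : i.neg.neg = i := by simp [Idx.neg]
lemma Idx.neg_ne (i : Idx n) : i.neg ≠ i := by
  simp [Idx.neg, Prod.ext_iff]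
lemma Idx.toInt_injective : Function.Injective (Idx.toInt (n := n)) := by
  rintro ⟨a, b⟩ ⟨c, d⟩ h
  cases b <;> cases d <;> simp [Idx.toInt, Prod.ext_iff, Fin.ext_iff] at h ⊢ <;> omega

def gg (u v w : Idx n → R) (l k : Idx n) : R :=
  u (Idx.neg k) * Idx.sgn R k * (v l * w k - v k * w l)

lemma gg_self (u v w : Idx n → R) (l : Idx n) : gg u v w l l = 0 := by simp [gg]

lemma vv_apply (u v w : Idx n → R) (j k l : Idx n) :
    vv u v w j k l = (if l = j then gg u v w l k else 0) + (if l = k then gg u v w l j else 0) := by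
  simp only [vv, evec, gg]
  split_ifs <;> subst_vars <;> ring

lemma sum_sgn (u x : Idx n → R) :
    ∑ k : Idx n, Idx.sgn R k * u (Idx.neg k) * x k = sform x u := by
  rw [sform, Fintype.sum_prod_type]
  refine Finset.sum_congr rfl fun a _ => ?_
  simp [Idx.sgn, Idx.neg]
  ring

lemma sform_anti (x y : Idx n → R) : sform x y = - sform y x := by
  rw [sform, sform, ← Finset.sum_neg_distrib]
  exact Finset.sum_congr rfl fun a _ => by ring

lemma sum_gg (u v w : Idx n → R) (A : R) (hA : sform w u = A) (huv : sform u v = 0) (l : Idx n) :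
    ∑ k : Idx n, gg u v w l k = v l * A := by
  have : ∑ k : Idx n, gg u v w l k =
      v l * (∑ k : Idx n, Idx.sgn R k * u (Idx.neg k) * w k)
      - w l * (∑ k : Idx n, Idx.sgn R k * u (Idx.neg k) * v k) := by
    rw [Finset.mul_sum, Finset.mul_sum, ← Finset.sum_sub_distrib]
    exact Finset.sum_congr rfl fun k _ => by rw [gg]; ring
  rw [this, sum_sgn, sum_sgn, hA, sform_anti v u, huv]
  ring

/-- Coordinate bookkeeping for the decomposition `vA = p + q + r` when `v_i = v_{-i} = 0`. -/
theorem decomposition_bookkeeping (u v w : Idx n → R) (A : R) (i : Idx n)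
    (hA : sform w u = A) (huv : sform u v = 0)
    (hvi : v i = 0) (hvni : v (Idx.neg i) = 0) :
    vv u v w i (Idx.neg i) = 0 ∧
    (pvec u v w i + qvec u v w i + rvec u v w i = fun l => v l * A) ∧
    pvec u v w i (Idx.neg i) = 0 ∧
    pvec u v w i i = 0 ∧
    qvec u v w i i = 0 ∧
    qvec u v w i (Idx.neg i) = 0 ∧
    rvec u v w i i = 0 ∧
    rvec u v w i (Idx.neg i) = 0 := by
  classical
  have hne : i ≠ Idx.neg i := fun h => Idx.neg_ne i h.symm
  have hsplit : ∀ t : Idx n → R,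
      (∑ k ∈ Finset.univ.filter (fun k : Idx n => k ≠ i ∧ k ≠ Idx.neg i), t k)
        = (∑ k : Idx n, t k) - t i - t (Idx.neg i) := by
    intro t
    have hnot : Finset.univ.filter (fun k : Idx n => ¬(k ≠ i ∧ k ≠ Idx.neg i)) = {i, Idx.neg i} := by
      ext k
      simp only [Finset.mem_filter, Finset.mem_univ, true_and, Finset.mem_insert,
        Finset.mem_singleton]
      tauto
    rw [← Finset.sum_filter_add_sum_filter_not Finset.univ
      (fun k : Idx n => k ≠ i ∧ k ≠ Idx.neg i) t, hnot, Finset.sum_pair hne]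
    ring
  have hggini : gg u v w i (Idx.neg i) = 0 := by simp [gg, hvi, hvni]
  have hggnii : gg u v w (Idx.neg i) i = 0 := by simp [gg, hvi, hvni]
  -- p at i
  have hp_i : pvec u v w i i = 0 := by
    simp only [pvec, Finset.sum_apply]
    refine Finset.sum_eq_zero fun k hk => ?_
    simp only [Finset.mem_filter, Finset.mem_univ, true_and] at hk
    rw [vv_apply, if_neg hne, if_neg (fun h => hk.1 h.symm), add_zero]
  -- p at neg i
  have hp_ni : pvec u v w i (Idx.neg i) = 0 := by
    have h1 : pvec u v w i (Idx.neg i)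
        = ∑ k ∈ Finset.univ.filter (fun k : Idx n => k ≠ i ∧ k ≠ Idx.neg i),
            gg u v w (Idx.neg i) k := by
      simp only [pvec, Finset.sum_apply]
      refine Finset.sum_congr rfl fun k hk => ?_
      simp only [Finset.mem_filter, Finset.mem_univ, true_and] at hk
      rw [vv_apply, if_pos rfl, if_neg (fun h => hk.2 h.symm), add_zero]
    rw [h1, hsplit, sum_gg u v w A hA huv, hvni, hggnii, gg_self]
    ring
  -- q at i
  have hq_i : qvec u v w i i = 0 := by
    have h1 : qvec u v w i i
        = ∑ k ∈ Finset.univ.filter (fun k : Idx n => k ≠ i ∧ k ≠ Idx.neg i),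
            gg u v w i k := by
      simp only [qvec, Finset.sum_apply]
      refine Finset.sum_congr rfl fun k hk => ?_
      simp only [Finset.mem_filter, Finset.mem_univ, true_and] at hk
      rw [vv_apply, if_pos rfl, if_neg (fun h => hk.1 h.symm), add_zero]
    rw [h1, hsplit, sum_gg u v w A hA huv, hvi, hggini, gg_self]
    ring
  -- q at neg i
  have hq_ni : qvec u v w i (Idx.neg i) = 0 := by
    simp only [qvec, Finset.sum_apply]
    refine Finset.sum_eq_zero fun k hk => ?_
    simp only [Finset.mem_filter, Finset.mem_univ, true_and] at hk
    rw [vv_apply, if_neg (fun h => hne h.symm), if_neg (fun h => hk.2 h.symm), add_zero]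
  -- r at i
  have hr_i : rvec u v w i i = 0 := by
    simp only [rvec, Finset.sum_apply]
    refine Finset.sum_eq_zero fun p hp => ?_
    simp only [Finset.mem_filter, Finset.mem_univ, true_and] at hp
    rw [vv_apply, if_neg (fun h => hp.1 h.symm), if_neg (fun h => hp.2.2.1 h.symm), add_zero]
  -- r at neg i
  have hr_ni : rvec u v w i (Idx.neg i) = 0 := by
    simp only [rvec, Finset.sum_apply]
    refine Finset.sum_eq_zero fun p hp => ?_
    simp only [Finset.mem_filter, Finset.mem_univ, true_and] at hp
    rw [vv_apply, if_neg (fun h => hp.2.1 h.symm), if_neg (fun h => hp.2.2.2.1 h.symm), add_zero]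
  -- the pair term vanishes
  have hvv0 : vv u v w i (Idx.neg i) = 0 := by
    funext l
    simp [vv, hvi, hvni]
  refine ⟨hvv0, ?_, hp_ni, hp_i, hq_i, hq_ni, hr_i, hr_ni⟩
  funext l
  simp only [Pi.add_apply]
  by_cases hl1 : l = i
  · subst hl1
    rw [hp_i, hq_i, hr_i, hvi]
    ring
  by_cases hl2 : l = Idx.neg i
  · subst hl2
    rw [hp_ni, hq_ni, hr_ni, hvni]
    ring
  -- generic coordinate
  have hlmem : l ∈ Finset.univ.filter (fun k : Idx n => k ≠ i ∧ k ≠ Idx.neg i) := by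
    simp [hl1, hl2]
  have hp_l : pvec u v w i l = gg u v w l (Idx.neg i) := by
    have h1 : pvec u v w i l
        = ∑ k ∈ Finset.univ.filter (fun k : Idx n => k ≠ i ∧ k ≠ Idx.neg i),
            (if l = k then gg u v w l (Idx.neg i) else 0) := by
      simp only [pvec, Finset.sum_apply]
      exact Finset.sum_congr rfl fun k hk => by rw [vv_apply, if_neg hl2, zero_add]
    rw [h1, Finset.sum_ite_eq, if_pos hlmem]
  have hq_l : qvec u v w i l = gg u v w l i := by
    have h1 : qvec u v w i l
        = ∑ k ∈ Finset.univ.filter (fun k : Idx n => k ≠ i ∧ k ≠ Idx.neg i),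
            (if l = k then gg u v w l i else 0) := by
      simp only [qvec, Finset.sum_apply]
      exact Finset.sum_congr rfl fun k hk => by rw [vv_apply, if_neg hl1, zero_add]
    rw [h1, Finset.sum_ite_eq, if_pos hlmem]
  have hr_l : rvec u v w i l
      = ∑ k ∈ Finset.univ.filter (fun k : Idx n => k ≠ i ∧ k ≠ Idx.neg i), gg u v w l k := by
    simp only [rvec, Finset.sum_apply]
    refine Finset.sum_bij_ne_zero (fun p _ _ => if p.1 = l then p.2 else p.1) ?_ ?_ ?_ ?_
    · intro p hp hnz
      simp only [Finset.mem_filter, Finset.mem_univ, true_and] at hp ⊢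
      split_ifs
      · exact ⟨hp.2.2.1, hp.2.2.2.1⟩
      · exact ⟨hp.1, hp.2.1⟩
    · intro p₁ h₁₁ h₁₂ p₂ h₂₁ h₂₂ heq
      simp only [Finset.mem_filter, Finset.mem_univ, true_and] at h₁₁ h₂₁
      have key : ∀ (p : Idx n × Idx n), vv u v w p.1 p.2 l ≠ 0 → p.1 ≠ l → p.2 = l := by
        intro p hnz hp1
        by_contra hp2
        apply hnz
        rw [vv_apply, if_neg (fun h => hp1 h.symm), if_neg (fun h => hp2 h.symm), add_zero]
      by_cases c1 : p₁.1 = l <;> by_cases c2 : p₂.1 = l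
      · rw [if_pos c1, if_pos c2] at heq
        exact Prod.ext (c1.trans c2.symm) heq
      · rw [if_pos c1, if_neg c2] at heq
        exfalso
        have e2 := key p₂ h₂₂ c2
        have t1 : p₁.1.toInt < p₁.2.toInt := h₁₁.2.2.2.2
        have t2 : p₂.1.toInt < p₂.2.toInt := h₂₁.2.2.2.2
        rw [c1, heq] at t1
        rw [e2] at t2
        omega
      · rw [if_neg c1, if_pos c2] at heq
        exfalso
        have e1 := key p₁ h₁₂ c1
        have t1 : p₁.1.toInt < p₁.2.toInt := h₁₁.2.2.2.2
        have t2 : p₂.1.toInt < p₂.2.toInt := h₂₁.2.2.2.2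
        rw [e1] at t1
        rw [c2, ← heq] at t2
        omega
      · rw [if_neg c1, if_neg c2] at heq
        exact Prod.ext heq ((key p₁ h₁₂ c1).trans (key p₂ h₂₂ c2).symm)
    · intro b hb hgb
      simp only [Finset.mem_filter, Finset.mem_univ, true_and] at hb
      have hbl : b ≠ l := fun h => hgb (h ▸ gg_self u v w l)
      rcases lt_trichotomy l.toInt b.toInt with hlt | heq | hgt
      · refine ⟨(l, b), ?_, ?_, ?_⟩
        · simp only [Finset.mem_filter, Finset.mem_univ, true_and]
          exact ⟨hl1, hl2, hb.1, hb.2, hlt⟩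
        · rw [vv_apply, if_pos rfl, if_neg (fun h => hbl h.symm), add_zero]
          exact hgb
        · simp
      · exact absurd (Idx.toInt_injective heq) (fun h => hbl h.symm)
      · refine ⟨(b, l), ?_, ?_, ?_⟩
        · simp only [Finset.mem_filter, Finset.mem_univ, true_and]
          exact ⟨hb.1, hb.2, hl1, hl2, hgt⟩
        · rw [vv_apply, if_neg (fun h => hbl h.symm), if_pos rfl, zero_add]
          exact hgb
        · simp [hbl]
    · intro p h₁ h₂
      simp only [Finset.mem_filter, Finset.mem_univ, true_and] at h₁
      by_cases c : p.1 = l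
      · have hne2 : l ≠ p.2 := by
          intro h
          have := h₁.2.2.2.2
          rw [c, ← h] at this
          omega
        rw [if_pos c, vv_apply, if_pos c.symm, if_neg hne2, add_zero]
      · have e : p.2 = l := by
          by_contra hp2
          apply h₂
          rw [vv_apply, if_neg (fun h => c h.symm), if_neg (fun h => hp2 h.symm), add_zero]
        rw [if_neg c, vv_apply, if_neg (fun h => c h.symm), if_pos e.symm, zero_add]
  rw [hp_l, hq_l, hr_l, hsplit, sum_gg u v w A hA huv]
  ring
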